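/- Let c: [0,∞) → X be a geodesic ray to η ≠ ξ as above. Then the sequence {c(t_n)} with t_n → ∞ is a Cauchy sequence in the uniformized metric d_ε: for t_m ≥ t_n sufficiently large, d_ε(c(t_n), c(t_m)) ≤ (1/ε) e^{ε[d(o,o') + 2(ξ|η)_o + 8δ]} e^{−εt_n}. -/

import Mathlib

open Filter Set Metric Real MeasureTheory

noncomputable section

/-- The Gromov product `(x|y)_o`. -/
def gp {X : Type*} [MetricSpace X] (o x y : X) : ℝ :=
  (dist x o + dist y o - dist x y) / 2

/-- A Gromov sequence (converging to a point of the boundary at infinity). -/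
def IsGromovSeq {X : Type*} [MetricSpace X] (o : X) (s : ℕ → X) : Prop :=
  ∀ N : ℝ, ∃ I : ℕ, ∀ i j : ℕ, I ≤ i → I ≤ j → N ≤ gp o (s i) (s j)

/-- Equivalence of Gromov sequences. -/
def GromovEquiv {X : Type*} [MetricSpace X] (o : X) (s t : ℕ → X) : Prop :=
  Tendsto (fun n => gp o (s n) (t n)) atTop atTop

/-- Extended Gromov product `(x|ξ)_w` of a point `x` with the boundary point `ξ`
represented by the Gromov sequence `s`. -/
def egp {X : Type*} [MetricSpace X] (w x : X) (s : ℕ → X) : ℝ :=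
  sInf {r | ∃ t : ℕ → X, GromovEquiv w s t ∧ r = liminf (fun n => gp w x (t n)) atTop}

/-- Extended Gromov product `(ξ|η)_w` of two boundary points represented by Gromov
sequences `s` and `t`. -/
def egp2 {X : Type*} [MetricSpace X] (w : X) (s t : ℕ → X) : ℝ :=
  sInf {r | ∃ s' t' : ℕ → X, GromovEquiv w s s' ∧ GromovEquiv w t t' ∧
    r = liminf (fun n => gp w (s' n) (t' n)) atTop}

/-- The Busemann function based at the boundary point represented by `s`, with base point `o`:
`b(x) = (ξ|o)_x - (ξ|x)_o`. -/
def busemann {X : Type*} [MetricSpace X] (o : X) (s : ℕ → X) (x : X) : ℝ :=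
  egp x o s - egp o x s

/-- `δ`-hyperbolicity in the sense of Gromov. -/
def IsDeltaHyp (X : Type*) [MetricSpace X] (δ : ℝ) : Prop :=
  ∀ o x y z : X, min (gp o x z) (gp o z y) - δ ≤ gp o x y

/-- A geodesic metric space: every pair of points is joined by a geodesic. -/
def GeodesicSpace (X : Type*) [MetricSpace X] : Prop :=
  ∀ x y : X, ∃ γ : ℝ → X, γ 0 = x ∧ γ (dist x y) = y ∧
    ∀ a ∈ Icc (0:ℝ) (dist x y), ∀ b ∈ Icc (0:ℝ) (dist x y), dist (γ a) (γ b) = |a - b|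

/-- The conformally deformed distance `d_ε(x,y) = inf ∫_γ ρ ds`, the infimum being taken
over (arclength parametrized, i.e. 1-Lipschitz) curves joining `x` and `y`. -/
def confDist {X : Type*} [MetricSpace X] (ρ : X → ℝ) (x y : X) : ℝ :=
  sInf {r | ∃ T : ℝ, ∃ γ : ℝ → X, 0 ≤ T ∧ γ 0 = x ∧ γ T = y ∧
    (∀ a ∈ Icc (0:ℝ) T, ∀ b ∈ Icc (0:ℝ) T, dist (γ a) (γ b) ≤ |a - b|) ∧
    r = ∫ t in (0:ℝ)..T, ρ (γ t)}

/-- The distance of `x` to the metric boundary of the conformally deformed space: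
the infimum of the `ρ`-lengths of (arclength parametrized) curves starting at `x` and
leaving every bounded set. -/
def confBdryDist {X : Type*} [MetricSpace X] (ρ : X → ℝ) (x : X) : ℝ :=
  sInf {r | ∃ γ : ℝ → X, γ 0 = x ∧
    (∀ a b : ℝ, 0 ≤ a → 0 ≤ b → dist (γ a) (γ b) ≤ |a - b|) ∧
    Tendsto (fun t => dist x (γ t)) atTop atTop ∧
    r = ∫ t in Ioi (0:ℝ), ρ (γ t)}

/-- The quasihyperbolic metric of the conformally deformed space `(X, d_ε)`:
`k_ε(x,y) = inf ∫_γ ρ(z)/d_ε(z) ds`, over (d-arclength parametrized) curves. -/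
def confQhDist {X : Type*} [MetricSpace X] (ρ : X → ℝ) (x y : X) : ℝ :=
  sInf {r | ∃ T : ℝ, ∃ γ : ℝ → X, 0 ≤ T ∧ γ 0 = x ∧ γ T = y ∧
    (∀ a ∈ Icc (0:ℝ) T, ∀ b ∈ Icc (0:ℝ) T, dist (γ a) (γ b) ≤ |a - b|) ∧
    r = ∫ t in (0:ℝ)..T, ρ (γ t) / confBdryDist ρ (γ t)}

/-- `X` is `K`-roughly starlike with respect to the boundary point represented by the
Gromov sequence `s`: every point of `X` lies within distance `K` of a geodesic line
emanating from that boundary point. -/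
def RoughlyStarlikeAt {X : Type*} [MetricSpace X] (o : X) (s : ℕ → X) (K : ℝ) : Prop :=
  ∀ x : X, ∃ γ : ℝ → X, (∀ a b : ℝ, dist (γ a) (γ b) = |a - b|) ∧
    GromovEquiv o s (fun n => γ (-(n : ℝ))) ∧ ∃ t : ℝ, dist x (γ t) ≤ K

/-!
The geodesic segment `c([t_n, t_m])` competes in the infimum defining `d_ε`, so it suffices to
bound `ρ_ε = e^{-εb}` along the ray. Since `b(x) ≥ d(x,o) - 2(x|ξ)_o - δ`, this amounts to
`(c(u)|ξ)_o ≤ (ξ|η)_o + δ` for large `u`: by `δ`-hyperbolicity, `(ξ|η)_o` is at least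
`min((c(u)|ξ)_o, (c(u)|η)_o) - δ`, and `(c(u)|η)_o ≥ u - d(o,o') - δ` grows while `(ξ|η)_o`
is finite because `η ≠ ξ`. Hence `ρ_ε(c(u)) ≤ e^{εC} e^{-εu}`, whose integral over
`[t_n, ∞)` is `ε⁻¹ e^{εC} e^{-εt_n}`.
-/

section GromovProduct

variable {X : Type*} [MetricSpace X]

lemma gp_nonneg (o x y : X) : 0 ≤ gp o x y := by
  have := dist_triangle x o y
  rw [dist_comm o y] at this
  unfold gp
  linarith

lemma gp_le_dist_left (o x y : X) : gp o x y ≤ dist x o := by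
  have := dist_triangle y x o
  rw [dist_comm y x] at this
  unfold gp
  linarith

lemma gp_comm (o x y : X) : gp o x y = gp o y x := by
  unfold gp
  rw [dist_comm x y]
  ring

lemma gp_swap_base (o x y : X) : gp x o y = dist x o - gp o x y := by
  unfold gp
  rw [dist_comm o x, dist_comm y x, dist_comm y o, dist_comm x y]
  ring

lemma gp_le_gp_add_dist_base (o w x y : X) : gp o x y ≤ gp w x y + dist o w := by
  have := dist_triangle x w o
  have := dist_triangle y w o
  rw [dist_comm w o] at *
  unfold gp
  linarith

lemma isBoundedUnder_le_gp (o x : X) (u : ℕ → X) :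
    IsBoundedUnder (· ≤ ·) atTop (fun n => gp o x (u n)) :=
  isBoundedUnder_of ⟨dist x o, fun _ => gp_le_dist_left _ _ _⟩

lemma isBoundedUnder_ge_gp (o : X) (u v : ℕ → X) :
    IsBoundedUnder (· ≥ ·) atTop (fun n => gp o (u n) (v n)) :=
  isBoundedUnder_of ⟨0, fun _ => gp_nonneg _ _ _⟩

lemma IsDeltaHyp.le_gp {δ : ℝ} (h : IsDeltaHyp X δ) {o x y z : X} {a : ℝ}
    (hxz : a ≤ gp o x z) (hzy : a ≤ gp o z y) : a - δ ≤ gp o x y := by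
  have := h o x y z
  have := le_min hxz hzy
  linarith

end GromovProduct

section GromovSequences

variable {X : Type*} [MetricSpace X]

lemma GromovEquiv.change_base {o : X} (w : X) {s t : ℕ → X} (h : GromovEquiv o s t) :
    GromovEquiv w s t :=
  tendsto_atTop_mono (fun n => by linarith [gp_le_gp_add_dist_base o w (s n) (t n)])
    (tendsto_atTop_add_const_right atTop (-dist o w) h)

lemma IsGromovSeq.gromovEquiv_self {o : X} {s : ℕ → X} (hs : IsGromovSeq o s) :
    GromovEquiv o s s :=
  tendsto_atTop.2 fun N => eventually_atTop.2 <| (hs N).imp fun _ hI n hn => hI n n hn hn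

lemma IsGromovSeq.exists_le_gp {δ : ℝ} (hhyp : IsDeltaHyp X δ) {o : X} {s a b : ℕ → X}
    (hs : IsGromovSeq o s) (ha : GromovEquiv o s a) (hb : GromovEquiv o s b) (N : ℝ) :
    ∃ I : ℕ, ∀ i j : ℕ, I ≤ i → I ≤ j → N ≤ gp o (a i) (b j) := by
  obtain ⟨I₁, hI₁⟩ := hs (N + 2 * δ)
  obtain ⟨I₂, hI₂⟩ := eventually_atTop.1 (ha.eventually_ge_atTop (N + δ))
  obtain ⟨I₃, hI₃⟩ := eventually_atTop.1 (hb.eventually_ge_atTop (N + 2 * δ))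
  refine ⟨max I₁ (max I₂ I₃), fun i j hi hj => ?_⟩
  simp only [max_le_iff] at hi hj
  have hsb : N + 2 * δ - δ ≤ gp o (s i) (b j) :=
    hhyp.le_gp (hI₁ i j hi.1 hj.1) (hI₃ j hj.2.2)
  have has : N + δ ≤ gp o (a i) (s i) := gp_comm o (s i) (a i) ▸ hI₂ i hi.2.1
  linarith [hhyp.le_gp has (by linarith : N + δ ≤ gp o (s i) (b j))]

lemma frequently_gp_le_of_gromovEquiv {δ : ℝ} (hhyp : IsDeltaHyp X δ) {o : X}
    {s t s' t' : ℕ → X} {b : ℝ} (hb : ∃ᶠ n in atTop, gp o (s n) (t n) < b)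
    (hs' : GromovEquiv o s s') (ht' : GromovEquiv o t t') :
    ∃ᶠ n in atTop, gp o (s' n) (t' n) ≤ b + 2 * δ := by
  by_contra hcon
  rw [not_frequently] at hcon
  have hev : ∀ᶠ n in atTop, b ≤ gp o (s n) (t n) := by
    filter_upwards [hcon, hs'.eventually_ge_atTop (b + δ), ht'.eventually_ge_atTop (b + 2 * δ)]
      with n hst hss htt
    have hst' : b + δ ≤ gp o (s' n) (t n) := by
      linarith [hhyp.le_gp (not_le.1 hst).le (gp_comm o (t n) (t' n) ▸ htt)]
    linarith [hhyp.le_gp hss hst']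
  obtain ⟨n, hlt, hge⟩ := (hb.and_eventually hev).exists
  linarith

end GromovSequences

section ExtendedGromovProduct

variable {X : Type*} [MetricSpace X]

lemma egp_le_liminf {o x : X} {s t' : ℕ → X} (ht' : GromovEquiv o s t') :
    egp o x s ≤ liminf (fun n => gp o x (t' n)) atTop := by
  refine csInf_le ⟨0, ?_⟩ ⟨t', ht', rfl⟩
  rintro r ⟨u, -, rfl⟩
  exact le_liminf_of_le (isBoundedUnder_le_gp o x u).isCoboundedUnder_ge
    (Eventually.of_forall fun _ => gp_nonneg _ _ _)

lemma limsup_gp_le_egp_add {δ : ℝ} (hhyp : IsDeltaHyp X δ) {o x : X} {s t' : ℕ → X}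
    (hs : IsGromovSeq o s) (ht' : GromovEquiv o s t') :
    limsup (fun n => gp o x (t' n)) atTop ≤ egp o x s + δ := by
  suffices limsup (fun n => gp o x (t' n)) atTop - δ ≤ egp o x s by linarith
  refine le_csInf ⟨_, s, hs.gromovEquiv_self, rfl⟩ ?_
  rintro r ⟨t'', ht'', rfl⟩
  obtain ⟨I, hI⟩ := hs.exists_le_gp hhyp ht' ht'' (dist x o)
  have hlow : ∀ i, I ≤ i → gp o x (t' i) ≤ liminf (fun n => gp o x (t'' n)) atTop + δ := by
    intro i hi
    have hj : ∀ j, I ≤ j → gp o x (t' i) - δ ≤ gp o x (t'' j) := fun j hj =>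
      hhyp.le_gp le_rfl ((gp_le_dist_left o x (t' i)).trans (hI i j hi hj))
    linarith [le_liminf_of_le (isBoundedUnder_le_gp o x t'').isCoboundedUnder_ge
      (eventually_atTop.2 ⟨I, hj⟩)]
  linarith [limsup_le_of_le (isBoundedUnder_ge_gp o (fun _ => x) t').isCoboundedUnder_le
    (eventually_atTop.2 ⟨I, hlow⟩)]

lemma dist_sub_le_busemann {δ : ℝ} (hhyp : IsDeltaHyp X δ) {o : X} (x : X) {s : ℕ → X}
    (hs : IsGromovSeq o s) : dist x o - 2 * egp o x s - δ ≤ busemann o s x := by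
  suffices dist x o - egp o x s - δ ≤ egp x o s by unfold busemann; linarith
  refine le_csInf ⟨_, s, hs.gromovEquiv_self.change_base x, rfl⟩ ?_
  rintro r ⟨t', ht', rfl⟩
  have hsub : liminf (fun n => gp x o (t' n)) atTop =
      dist x o - limsup (fun n => gp o x (t' n)) atTop := by
    simp only [gp_swap_base o x]
    exact liminf_const_sub atTop _ _ (isBoundedUnder_le_gp o x t')
      (isBoundedUnder_ge_gp o (fun _ => x) t').isCoboundedUnder_le
  linarith [limsup_gp_le_egp_add hhyp hs (ht'.change_base o) (x := x)]

end ExtendedGromovProduct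

section GeodesicRay

variable {X : Type*} [MetricSpace X]

def IsGeodesicRay (c : ℝ → X) : Prop :=
  ∀ a a' : ℝ, 0 ≤ a → 0 ≤ a' → dist (c a) (c a') = |a - a'|

namespace IsGeodesicRay

variable {c : ℝ → X}

lemma dist_eq_sub (hc : IsGeodesicRay c) {a b : ℝ} (ha : 0 ≤ a) (hab : a ≤ b) :
    dist (c a) (c b) = b - a := by
  rw [hc a b ha (ha.trans hab), abs_of_nonpos (sub_nonpos.2 hab), neg_sub]

lemma sub_dist_le_dist (hc : IsGeodesicRay c) (o : X) {t : ℝ} (ht : 0 ≤ t) :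
    t - dist o (c 0) ≤ dist (c t) o := by
  have := dist_triangle (c 0) o (c t)
  rw [hc.dist_eq_sub le_rfl ht, dist_comm (c 0) o, dist_comm o (c t)] at this
  linarith

lemma sub_dist_le_gp (hc : IsGeodesicRay c) (o : X) {t u : ℝ} (ht : 0 ≤ t) (htu : t ≤ u) :
    t - dist o (c 0) ≤ gp o (c t) (c u) := by
  have := hc.sub_dist_le_dist o ht
  have := hc.sub_dist_le_dist o (ht.trans htu)
  unfold gp
  rw [hc.dist_eq_sub ht htu]
  linarith

end IsGeodesicRay

end GeodesicRay

section BoundaryGromovProduct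

variable {X : Type*} [MetricSpace X] {δ : ℝ} {o : X} {s t : ℕ → X} {c : ℝ → X}

lemma min_egp_ray_sub_le_egp2 (hhyp : IsDeltaHyp X δ) (hs : IsGromovSeq o s)
    (ht : IsGromovSeq o t) (hne : ¬ GromovEquiv o s t) (hc : IsGeodesicRay c)
    (hcη : GromovEquiv o t (fun n => c n)) {u : ℝ} (hu : 0 ≤ u) :
    min (egp o (c u) s) (u - dist o (c 0) - δ) - δ ≤ egp2 o s t := by
  -- `hne` keeps every `liminf` in the definition of `egp2` from being a junk value
  obtain ⟨b, hb⟩ : ∃ b, ∃ᶠ n in atTop, gp o (s n) (t n) < b := by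
    simpa only [GromovEquiv, Filter.tendsto_atTop, not_forall, not_eventually, not_le]
      using hne
  refine le_csInf ⟨_, s, t, hs.gromovEquiv_self, ht.gromovEquiv_self, rfl⟩ ?_
  rintro r ⟨s', t', hs', ht', rfl⟩
  have hray : ∀ᶠ n in atTop, u - dist o (c 0) - δ ≤ gp o (c u) (t' n) := by
    obtain ⟨I, hI⟩ := ht.exists_le_gp hhyp hcη ht' (u - dist o (c 0))
    filter_upwards [eventually_ge_atTop I, eventually_ge_atTop ⌈u⌉₊] with n hnI hnu
    exact hhyp.le_gp (hc.sub_dist_le_gp o hu (Nat.ceil_le.1 hnu)) (hI n n hnI hnI)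
  refine (le_liminf_iff' (IsCoboundedUnder.of_frequently_le
    (frequently_gp_le_of_gromovEquiv hhyp hb hs' ht')) (isBoundedUnder_ge_gp o s' t')).2 ?_
  intro y hy
  have hyE : y + δ < liminf (fun n => gp o (c u) (s' n)) atTop :=
    (egp_le_liminf hs').trans_lt' (by linarith [min_le_left (egp o (c u) s) (u - dist o (c 0) - δ)])
  have hyK : y + δ ≤ u - dist o (c 0) - δ := by
    linarith [min_le_right (egp o (c u) s) (u - dist o (c 0) - δ)]
  filter_upwards [eventually_lt_of_lt_liminf hyE (isBoundedUnder_ge_gp o (fun _ => c u) s'),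
    hray] with n hsn htn
  have hsn' : y + δ ≤ gp o (s' n) (c u) := by rw [gp_comm]; exact hsn.le
  linarith [hhyp.le_gp hsn' (hyK.trans htn)]

lemma egp_ray_le_egp2_add (hhyp : IsDeltaHyp X δ) (hs : IsGromovSeq o s)
    (ht : IsGromovSeq o t) (hne : ¬ GromovEquiv o s t) (hc : IsGeodesicRay c)
    (hcη : GromovEquiv o t (fun n => c n)) {u : ℝ} (hu : 0 ≤ u)
    (hlarge : egp2 o s t + dist o (c 0) + 2 * δ < u) :
    egp o (c u) s ≤ egp2 o s t + δ := by
  have := min_egp_ray_sub_le_egp2 hhyp hs ht hne hc hcη hu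
  rcases min_le_iff.1 (show _ ≤ egp2 o s t + δ by linarith) with h | h
  · exact h
  · linarith

lemma eventually_sub_le_busemann_ray (hhyp : IsDeltaHyp X δ) (hs : IsGromovSeq o s)
    (ht : IsGromovSeq o t) (hne : ¬ GromovEquiv o s t) (hc : IsGeodesicRay c)
    (hcη : GromovEquiv o t (fun n => c n)) :
    ∀ᶠ u in atTop, u - (dist o (c 0) + 2 * egp2 o s t + 3 * δ) ≤ busemann o s (c u) := by
  filter_upwards [eventually_ge_atTop 0, eventually_gt_atTop (egp2 o s t + dist o (c 0) + 2 * δ)]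
    with u hu hlarge
  linarith [egp_ray_le_egp2_add hhyp hs ht hne hc hcη hu hlarge,
    dist_sub_le_busemann hhyp (c u) hs, hc.sub_dist_le_dist o hu]

end BoundaryGromovProduct

section ConformalDistance

variable {X : Type*} [MetricSpace X]

lemma confDist_le_integral {ρ : X → ℝ} (hρ : ∀ z, 0 ≤ ρ z) {γ : ℝ → X} {T : ℝ} (hT : 0 ≤ T)
    (hγ : ∀ a ∈ Icc (0:ℝ) T, ∀ b ∈ Icc (0:ℝ) T, dist (γ a) (γ b) ≤ |a - b|) :
    confDist ρ (γ 0) (γ T) ≤ ∫ v in (0:ℝ)..T, ρ (γ v) := by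
  refine csInf_le ⟨0, ?_⟩ ⟨T, γ, hT, rfl, rfl, hγ, rfl⟩
  rintro r ⟨T', γ', hT', -, -, -, rfl⟩
  exact intervalIntegral.integral_nonneg hT' fun v _ => hρ (γ' v)

lemma IsGeodesicRay.confDist_le {c : ℝ → X} (hc : IsGeodesicRay c) {ρ : X → ℝ}
    (hρ : ∀ z, 0 ≤ ρ z) {a b : ℝ} (ha : 0 ≤ a) (hab : a ≤ b) :
    confDist ρ (c a) (c b) ≤ ∫ v in (0:ℝ)..b - a, ρ (c (a + v)) := by
  have hγ := confDist_le_integral hρ (γ := fun v => c (a + v)) (sub_nonneg.2 hab)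
    fun v hv w hw => by
      rw [hc _ _ (by linarith [hv.1]) (by linarith [hw.1]), add_sub_add_left_eq_sub]
  simpa using hγ

end ConformalDistance

lemma integral_exp_neg_mul_le {ε : ℝ} (hε : 0 < ε) (T : ℝ) :
    ∫ v in (0:ℝ)..T, exp (-(ε * v)) ≤ 1 / ε := by
  have h := intervalIntegral.integral_comp_mul_left exp (neg_ne_zero.2 hε.ne') (a := 0) (b := T)
  simp only [neg_mul, mul_zero, integral_exp, exp_zero, smul_eq_mul] at h
  rw [h, one_div, inv_neg, neg_mul, ← mul_neg, neg_sub]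
  linarith [mul_pos (inv_pos.2 hε) (exp_pos (-(ε * T)))]

/-- The bound `f ≤ A e^{-εv}` needs no integrability of `f`: a nonnegative non-integrable
function has integral `0`. -/
lemma intervalIntegral_le_div_of_le_mul_exp {f : ℝ → ℝ} {A ε T : ℝ} (hε : 0 < ε) (hT : 0 ≤ T)
    (hf₀ : ∀ v ∈ Icc 0 T, 0 ≤ f v) (hf : ∀ v ∈ Icc 0 T, f v ≤ A * exp (-(ε * v))) :
    ∫ v in (0:ℝ)..T, f v ≤ A / ε := by
  have hA : 0 ≤ A := by
    simpa using (hf₀ 0 ⟨le_rfl, hT⟩).trans (hf 0 ⟨le_rfl, hT⟩)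
  have hIoc : ∀ v ∈ Ioc 0 T, v ∈ Icc 0 T := fun _ hv => Ioc_subset_Icc_self hv
  calc ∫ v in (0:ℝ)..T, f v ≤ ∫ v in (0:ℝ)..T, A * exp (-(ε * v)) := by
        simp only [intervalIntegral.integral_of_le hT]
        refine integral_mono_of_nonneg
          (ae_restrict_of_forall_mem measurableSet_Ioc fun v hv => hf₀ v (hIoc v hv))
          (Continuous.integrableOn_Ioc (by fun_prop))
          (ae_restrict_of_forall_mem measurableSet_Ioc fun v hv => hf v (hIoc v hv))
    _ = A * ∫ v in (0:ℝ)..T, exp (-(ε * v)) := intervalIntegral.integral_const_mul _ _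
    _ ≤ A * (1 / ε) := mul_le_mul_of_nonneg_left (integral_exp_neg_mul_le hε T) hA
    _ = A / ε := by ring

theorem confDist_cauchy_along_ray_general {X : Type*} [MetricSpace X]
    (δ : ℝ) (hδ : 0 ≤ δ) (hhyp : IsDeltaHyp X δ)
    (o : X) (s t : ℕ → X) (hs : IsGromovSeq o s) (ht : IsGromovSeq o t)
    (hne : ¬ GromovEquiv o s t)
    (c : ℝ → X) (hray : ∀ a a' : ℝ, 0 ≤ a → 0 ≤ a' → dist (c a) (c a') = |a - a'|)
    (hcη : GromovEquiv o t (fun n => c n))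
    (ε : ℝ) (hε : 0 < ε) :
    ∃ T : ℝ, 0 ≤ T ∧ ∀ tn tm : ℝ, T ≤ tn → tn ≤ tm →
      confDist (fun z => Real.exp (-(ε * busemann o s z))) (c tn) (c tm) ≤
        (1 / ε) * Real.exp (ε * (dist o (c 0) + 2 * egp2 o s t + 8 * δ)) *
          Real.exp (-(ε * tn)) := by
  set C := dist o (c 0) + 2 * egp2 o s t + 8 * δ
  obtain ⟨T, hT⟩ := eventually_atTop.1 (eventually_sub_le_busemann_ray hhyp hs ht hne hray hcη)
  refine ⟨max T 0, le_max_right _ _, fun tn tm htn htnm => ?_⟩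
  have htn₀ : 0 ≤ tn := (le_max_right _ _).trans htn
  calc confDist (fun z => exp (-(ε * busemann o s z))) (c tn) (c tm)
      ≤ ∫ v in (0:ℝ)..tm - tn, exp (-(ε * busemann o s (c (tn + v)))) :=
        IsGeodesicRay.confDist_le hray (fun _ => (exp_pos _).le) htn₀ htnm
    _ ≤ exp (ε * C) * exp (-(ε * tn)) / ε := by
        refine intervalIntegral_le_div_of_le_mul_exp hε (sub_nonneg.2 htnm)
          (fun _ _ => (exp_pos _).le) fun v hv => ?_
        have hb := hT (tn + v) (by linarith [le_max_left T 0, hv.1])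
        rw [← exp_add, ← exp_add, exp_le_exp]
        linarith [mul_le_mul_of_nonneg_left hb hε.le, mul_nonneg hε.le hδ]
    _ = 1 / ε * exp (ε * C) * exp (-(ε * tn)) := by ring

/-- Along a geodesic ray `c` converging to a boundary point `η ≠ ξ`, the points `c(t_n)`
form a Cauchy sequence in the uniformized metric `d_ε`: for all sufficiently large
`t_n ≤ t_m`, `d_ε(c(t_n), c(t_m)) ≤ (1/ε) e^{ε[d(o,o') + 2(ξ|η)_o + 8δ]} e^{−εt_n}`,
where `o' = c(0)`. -/
theorem confDist_cauchy_along_ray {X : Type*} [MetricSpace X] [ProperSpace X]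
    (δ : ℝ) (hδ : 0 ≤ δ) (hhyp : IsDeltaHyp X δ) (hgeo : GeodesicSpace X)
    (o : X) (s t : ℕ → X) (hs : IsGromovSeq o s) (ht : IsGromovSeq o t)
    (hne : ¬ GromovEquiv o s t)
    (c : ℝ → X) (hray : ∀ a a' : ℝ, 0 ≤ a → 0 ≤ a' → dist (c a) (c a') = |a - a'|)
    (hcη : GromovEquiv o t (fun n => c n))
    (ε : ℝ) (hε : 0 < ε) :
    ∃ T : ℝ, 0 ≤ T ∧ ∀ tn tm : ℝ, T ≤ tn → tn ≤ tm →
      confDist (fun z => Real.exp (-(ε * busemann o s z))) (c tn) (c tm) ≤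
        (1 / ε) * Real.exp (ε * (dist o (c 0) + 2 * egp2 o s t + 8 * δ)) *
          Real.exp (-(ε * tn)) :=
  confDist_cauchy_along_ray_general δ hδ hhyp o s t hs ht hne c hray hcη ε hε
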